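/- arXiv:1706.09069 — 3 statements merged into one kernel-verified Lean document; each statement's English description precedes it below -/
import Mathlib

section
/- Let a ∈ (0,1/2], b ∈ (0,1], h ≥ 0, and let ν be a Borel measure on [0,π] with ν ≤ (1/π)·Lebesgue measure, ν([0,π]) ≤ a, and ∫ (cosh(h) − sinh(h)·cos(φ))^{-1} dν(φ) ≥ b. Then e^h ≥ tan(πb/2)/tan(πa/2), i.e., h ≥ log(tan(πb/2)/tan(πa/2)). -/
/-!
The Poisson kernel `φ ↦ (cosh h - sinh h * cos φ)⁻¹` is decreasing on `[0, π]`, so among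
measures on `[0, π]` with density at most `1/π` and mass at most `a`, its integral is largest
for `1/π` times Lebesgue measure on `[0, π a]` (the bathtub principle). Since
`2 arctan (e^h tan (φ/2))` is an antiderivative of the kernel, that extremal integral is
`(2/π) arctan (e^h tan (π a / 2))`, and comparing it with `b` gives
`tan (π b / 2) ≤ e^h tan (π a / 2)`.
-/

open Real MeasureTheory Set

section Bathtub

variable {α : Type*} [MeasurableSpace α] {μ ν : Measure α} {s : Set α} {c : ℝ}

lemma MeasureTheory.Measure.le_smul_restrict_of_le_smul (hν : ν ≤ ENNReal.ofReal c • μ)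
    (hs : ν sᶜ = 0) : ν ≤ ENNReal.ofReal c • μ.restrict s := by
  rw [← Measure.restrict_smul, ← Measure.restrict_eq_self_of_ae_mem (ae_iff.mpr hs)]
  exact Measure.restrict_mono subset_rfl hν

lemma integral_le_mul_setIntegral_of_le_smul {g : α → ℝ} (hc : 0 ≤ c)
    (hν : ν ≤ ENNReal.ofReal c • μ.restrict s) (hg : 0 ≤ g) (hgi : IntegrableOn g s μ) :
    ∫ x, g x ∂ν ≤ c * ∫ x in s, g x ∂μ := by
  calc ∫ x, g x ∂ν ≤ ∫ x, g x ∂(ENNReal.ofReal c • μ.restrict s) :=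
        integral_mono_measure hν (Filter.Eventually.of_forall hg)
          (hgi.smul_measure ENNReal.ofReal_ne_top)
    _ = c * ∫ x in s, g x ∂μ := by
        rw [integral_smul_measure, ENNReal.toReal_ofReal hc, smul_eq_mul]

end Bathtub

lemma setIntegral_Icc_max_sub_eq_of_antitoneOn {f : ℝ → ℝ} {L x₀ : ℝ}
    (hf : AntitoneOn f (Icc 0 L)) (hx₀ : x₀ ∈ Icc 0 L) :
    ∫ x in Icc 0 L, max (f x - f x₀) 0 = (∫ x in 0..x₀, f x) - x₀ * f x₀ := by
  have hsub : Icc 0 x₀ ⊆ Icc 0 L := Icc_subset_Icc_right hx₀.2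
  rw [setIntegral_eq_of_subset_of_forall_sdiff_eq_zero measurableSet_Icc hsub]
  · rw [setIntegral_congr_fun measurableSet_Icc (g := fun x => f x - f x₀)
      fun x hx => max_eq_left (sub_nonneg.mpr (hf (hsub hx) hx₀ hx.2))]
    rw [integral_sub ((hf.integrableOn_isCompact isCompact_Icc).mono_set hsub)
      (integrableOn_const measure_Icc_lt_top.ne), setIntegral_const,
      Real.volume_real_Icc_of_le hx₀.1, smul_eq_mul, integral_Icc_eq_integral_Ioc,
      ← intervalIntegral.integral_of_le hx₀.1, sub_zero]
  · intro x ⟨hxL, hx⟩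
    have hxx₀ : x₀ ≤ x := le_of_lt (not_le.mp fun h => hx ⟨hxL.1, h⟩)
    exact max_eq_right (sub_nonpos.mpr (hf hx₀ hxL hxx₀))

theorem integral_le_mul_intervalIntegral_of_antitoneOn {ν : Measure ℝ} {f : ℝ → ℝ}
    {c L x₀ : ℝ} (hc : 0 ≤ c) (hν : ν ≤ ENNReal.ofReal c • volume)
    (hsupp : ν (Icc 0 L)ᶜ = 0)
    (hmass : ν (Icc 0 L) ≤ ENNReal.ofReal (c * x₀)) (hf : AntitoneOn f (Icc 0 L))
    (hx₀ : x₀ ∈ Icc 0 L) (hfx₀ : 0 ≤ f x₀) :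
    ∫ x, f x ∂ν ≤ c * ∫ x in 0..x₀, f x := by
  have hνuniv : ν univ ≤ ENNReal.ofReal (c * x₀) := by
    refine (measure_univ_le_add_compl (Icc 0 L)).trans ?_
    rwa [hsupp, add_zero]
  have : IsFiniteMeasure ν := ⟨hνuniv.trans_lt ENNReal.ofReal_lt_top⟩
  set g : ℝ → ℝ := fun x => max (f x - f x₀) 0
  have hle := Measure.le_smul_restrict_of_le_smul hν hsupp
  have hfi : IntegrableOn f (Icc 0 L) := hf.integrableOn_isCompact isCompact_Icc
  have hgi : IntegrableOn g (Icc 0 L) :=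
    (hfi.sub (integrableOn_const measure_Icc_lt_top.ne)).pos_part
  have hfν : Integrable f ν := (hfi.smul_measure ENNReal.ofReal_ne_top).mono_measure hle
  have hgν : Integrable g ν := (hfν.sub (integrable_const (f x₀))).pos_part
  calc ∫ x, f x ∂ν ≤ ∫ x, (g x + f x₀) ∂ν :=
        integral_mono hfν (hgν.add (integrable_const _)) fun x => by
          simp only [g]; linarith [le_max_left (f x - f x₀) 0]
    _ = ∫ x, g x ∂ν + ν.real univ * f x₀ := by
        rw [integral_add hgν (integrable_const _), integral_const, smul_eq_mul]
    _ ≤ c * ((∫ x in 0..x₀, f x) - x₀ * f x₀) + c * x₀ * f x₀ := by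
        rw [← setIntegral_Icc_max_sub_eq_of_antitoneOn hf hx₀]
        gcongr
        · exact integral_le_mul_setIntegral_of_le_smul hc hle (fun x => le_max_right _ _) hgi
        · exact ENNReal.toReal_le_of_le_ofReal (mul_nonneg hc hx₀.1) hνuniv
    _ = c * ∫ x in 0..x₀, f x := by ring

/-- The Poisson kernel of the hyperbolic plane for two points at distance `h`, as a density with
respect to the visual angle `φ` at the first point, measured from the direction of the second. -/
noncomputable def hyperbolicPoissonKernel (h φ : ℝ) : ℝ := (cosh h - sinh h * cos φ)⁻¹

lemma cosh_sub_sinh_mul_cos (h φ : ℝ) :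
    cosh h - sinh h * cos φ = exp h * sin (φ / 2) ^ 2 + exp (-h) * cos (φ / 2) ^ 2 := by
  have hcos : cos φ = 2 * cos (φ / 2) ^ 2 - 1 := by
    rw [cos_sq, show 2 * (φ / 2) = φ by ring]; ring
  rw [cosh_eq, sinh_eq, hcos]
  linear_combination (-exp h) * sin_sq_add_cos_sq (φ / 2)

lemma cosh_sub_sinh_mul_cos_pos (h φ : ℝ) : 0 < cosh h - sinh h * cos φ := by
  have hsinh : |sinh h| < cosh h := abs_lt.mpr
    ⟨by linarith [sinh_lt_cosh (-h), sinh_neg h, cosh_neg h], sinh_lt_cosh h⟩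
  have : sinh h * cos φ ≤ |sinh h| :=
    calc sinh h * cos φ ≤ |sinh h| * |cos φ| := abs_mul (sinh h) (cos φ) ▸ le_abs_self _
      _ ≤ |sinh h| := mul_le_of_le_one_right (abs_nonneg _) (abs_cos_le_one φ)
  linarith

lemma continuous_hyperbolicPoissonKernel (h : ℝ) : Continuous (hyperbolicPoissonKernel h) :=
  (continuous_const.sub (continuous_const.mul continuous_cos)).inv₀
    fun φ => (cosh_sub_sinh_mul_cos_pos h φ).ne'

lemma hyperbolicPoissonKernel_pos (h φ : ℝ) : 0 < hyperbolicPoissonKernel h φ :=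
  inv_pos.mpr (cosh_sub_sinh_mul_cos_pos h φ)

lemma antitoneOn_hyperbolicPoissonKernel {h : ℝ} (hh : 0 ≤ h) :
    AntitoneOn (hyperbolicPoissonKernel h) (Icc 0 π) :=
  fun x hx y hy hxy => inv_anti₀ (cosh_sub_sinh_mul_cos_pos h x) <| by
    have := cos_le_cos_of_nonneg_of_le_pi hx.1 hy.2 hxy
    have := sinh_nonneg_iff.mpr hh
    nlinarith

lemma hasDerivAt_two_mul_arctan_exp_mul_tan {h φ : ℝ} (hφ : φ ∈ Ioo (-π) π) :
    HasDerivAt (fun x => 2 * arctan (exp h * tan (x / 2))) (hyperbolicPoissonKernel h φ) φ := by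
  have hcos : 0 < cos (φ / 2) := cos_pos_of_mem_Ioo ⟨by linarith [hφ.1], by linarith [hφ.2]⟩
  have htan : HasDerivAt (fun x => tan (x / 2)) (1 / cos (φ / 2) ^ 2 * (1 / 2)) φ := by
    simpa [Function.comp_def] using
      (hasDerivAt_tan hcos.ne').comp φ ((hasDerivAt_id φ).div_const 2)
  refine (((hasDerivAt_arctan _).comp φ (htan.const_mul (exp h))).const_mul 2).congr_deriv ?_
  rw [hyperbolicPoissonKernel, cosh_sub_sinh_mul_cos, tan_eq_sin_div_cos, exp_neg]
  field_simp
  ring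

lemma integral_hyperbolicPoissonKernel (h : ℝ) {x : ℝ} (hx : x ∈ Ioo (-π) π) :
    ∫ φ in 0..x, hyperbolicPoissonKernel h φ = 2 * arctan (exp h * tan (x / 2)) := by
  rw [intervalIntegral.integral_eq_sub_of_hasDerivAt
    (fun φ hφ => hasDerivAt_two_mul_arctan_exp_mul_tan ?_)
    ((continuous_hyperbolicPoissonKernel h).intervalIntegrable _ _)]
  · simp
  · rcases le_total 0 x with h0 | h0
    · rw [uIcc_of_le h0] at hφ; exact ⟨by linarith [hφ.1, pi_pos], hφ.2.trans_lt hx.2⟩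
    · rw [uIcc_of_ge h0] at hφ; exact ⟨hx.1.trans_le hφ.1, by linarith [hφ.2, pi_pos]⟩

theorem stmt_4 (a b h : ℝ) (ha : a ∈ Set.Ioc (0 : ℝ) (1 / 2))
    (hb : b ∈ Set.Ioc (0 : ℝ) 1) (hh : 0 ≤ h)
    (ν : Measure ℝ)
    (hν : ν ≤ (ENNReal.ofReal (1 / π)) • volume)
    (hsupp : ν (Set.Icc 0 π)ᶜ = 0)
    (hmass : ν (Set.Icc 0 π) ≤ ENNReal.ofReal a)
    (hint : b ≤ ∫ φ, (Real.cosh h - Real.sinh h * Real.cos φ)⁻¹ ∂ν) :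
    Real.exp h ≥ Real.tan (π * b / 2) / Real.tan (π * a / 2) ∧
    h ≥ Real.log (Real.tan (π * b / 2) / Real.tan (π * a / 2)) := by
  obtain ⟨ha0, ha2⟩ := ha
  obtain ⟨hb0, hb1⟩ := hb
  have hπ := pi_pos
  have hx₀ : π * a ∈ Icc 0 π := ⟨by positivity, by nlinarith⟩
  have hbound : π * b / 2 ≤ arctan (exp h * tan (π * a / 2)) := by
    have hbathtub := integral_le_mul_intervalIntegral_of_antitoneOn (by positivity) hν hsupp
      (by rwa [one_div, inv_mul_cancel_left₀ hπ.ne']) (antitoneOn_hyperbolicPoissonKernel hh)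
      hx₀ (hyperbolicPoissonKernel_pos h _).le
    rw [integral_hyperbolicPoissonKernel h ⟨by linarith [hx₀.1], by nlinarith⟩] at hbathtub
    have hb' := hint.trans hbathtub
    rw [div_mul_eq_mul_div, one_mul, le_div_iff₀ hπ] at hb'
    linarith
  -- `tan (π / 2) = 0` in Mathlib, which makes the case `b = 1` trivial.
  rcases hb1.eq_or_lt with rfl | hb1
  · simp [hh, exp_nonneg]
  have htb : 0 < tan (π * b / 2) := tan_pos_of_pos_of_lt_pi_div_two (by positivity) (by nlinarith)
  have hta : 0 < tan (π * a / 2) := tan_pos_of_pos_of_lt_pi_div_two (by positivity) (by nlinarith)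
  have hratio : tan (π * b / 2) / tan (π * a / 2) ≤ exp h := by
    rw [div_le_iff₀ hta, ← arctan_le_arctan_iff,
      arctan_tan (by linarith [mul_pos hπ hb0]) (by nlinarith)]
    exact hbound
  exact ⟨hratio, (log_le_iff_le_exp (by positivity)).mpr hratio⟩
end

section
/- For every integer k ≥ 2, k·arccos(1 − 1/k) > π/2. -/
open Real

/-! Since `1 - t ^ 2 / 2 < cos t`, the angle `t = π / (2k)` has `cos t > 1 - 1 / k` as soon as
`π ^ 2 < 8k`; as `arccos` is decreasing, `arccos (1 - 1 / k) > π / (2k)`. -/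

theorem Real.lt_arccos_of_lt_cos {x t : ℝ} (hx : -1 ≤ x) (ht₀ : 0 ≤ t) (htπ : t ≤ π)
    (h : x < cos t) : t < arccos x :=
  calc t = arccos (cos t) := (arccos_cos ht₀ htπ).symm
    _ < arccos x := arccos_lt_arccos hx h (cos_le_one t)

theorem Real.one_sub_one_div_lt_cos_pi_div_two_mul {x : ℝ} (hx : π ^ 2 < 8 * x) :
    1 - 1 / x < cos (π / (2 * x)) := by
  have hx₀ : 0 < x := by nlinarith [pi_pos]
  have hsq : (π / (2 * x)) ^ 2 / 2 < 1 / x := by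
    rw [div_pow, div_div, div_lt_div_iff₀ (by positivity) hx₀]
    nlinarith
  linarith [one_sub_sq_div_two_lt_cos (x := π / (2 * x)) (by positivity)]

theorem stmt_9 (k : ℕ) (hk : 2 ≤ k) :
    π / 2 < (k : ℝ) * Real.arccos (1 - 1 / k) := by
  have hk₂ : (2 : ℝ) ≤ k := by exact_mod_cast hk
  have hk₀ : (0 : ℝ) < k := by linarith
  have hπ : π ^ 2 < 8 * k := by nlinarith [pi_lt_four, pi_pos]
  have hx : -1 ≤ 1 - 1 / (k : ℝ) := by
    have : 1 / (k : ℝ) ≤ 1 := (div_le_one hk₀).2 (by linarith)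
    linarith
  have htπ : π / (2 * k) ≤ π := div_le_self pi_pos.le (by linarith)
  calc π / 2 = k * (π / (2 * k)) := by field_simp
    _ < k * arccos (1 - 1 / k) := mul_lt_mul_of_pos_left
        (lt_arccos_of_lt_cos hx (by positivity) htπ (one_sub_one_div_lt_cos_pi_div_two_mul hπ)) hk₀
end

section
/- For the Fuchsian group Γ(2) generated by A = [[1,2],[0,1]] and B = [[1,0],[2,1]] acting on the upper half-plane, and the point z = i, the displacements satisfy d(i, A·i) = d(i, B·i) = log(3 + 2√2), and arccos(tanh(d(i,A·i)/2)) + arccos(tanh(d(i,B·i)/2)) = π/2. -/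
open scoped MatrixGroups

/-!
With `a, b, c, d` the entries of `g ∈ SL(2, ℝ)`, the point `g • i` is `(ac + bd + i) / (c² + d²)`,
and `ad - bc = 1` turns the distance formula into `cosh d(i, g • i) = (a² + b² + c² + d²) / 2`.
Both generators of `Γ(2)` have squared Frobenius norm `6`, so both displacements are `arcosh 3`,
which is `log (3 + 2√2)`; and `tanh (x / 2) = sinh x / (cosh x + 1) = √8 / 4 = cos (π / 4)`.
-/

namespace Real

theorem tanh_half_eq_sinh_div_cosh_add_one (x : ℝ) :
    tanh (x / 2) = sinh x / (cosh x + 1) := by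
  have hx : x = 2 * (x / 2) := by ring
  have hc := cosh_pos (x / 2)
  have hcs := cosh_sq_sub_sinh_sq (x / 2)
  rw [hx, cosh_two_mul, sinh_two_mul, ← hx, tanh_eq_sinh_div_cosh, ← hcs]
  field_simp
  ring

theorem sqrt_three_sq_sub_one : √((3 : ℝ) ^ 2 - 1) = 2 * √2 := by
  rw [show (3 : ℝ) ^ 2 - 1 = 2 ^ 2 * 2 by norm_num, sqrt_mul (by norm_num), sqrt_sq (by norm_num)]

theorem arcosh_three : arcosh 3 = log (3 + 2 * √2) := by
  rw [arcosh, sqrt_three_sq_sub_one]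

theorem arccos_tanh_half_arcosh_three : arccos (tanh (arcosh 3 / 2)) = π / 4 := by
  have htanh : tanh (arcosh 3 / 2) = √2 / 2 := by
    rw [tanh_half_eq_sinh_div_cosh_add_one, sinh_arcosh (by norm_num), cosh_arcosh (by norm_num),
      sqrt_three_sq_sub_one]
    ring
  rw [htanh, ← cos_pi_div_four, arccos_cos (by positivity) (by linarith [pi_pos])]

end Real

namespace UpperHalfPlane

open Real

theorem cosh_dist_I_smul_I {R : Type*} [CommRing R] [Algebra R ℝ] (g : SL(2, R)) :
    cosh (dist I (g • I)) =
      (algebraMap R ℝ (g 0 0) ^ 2 + algebraMap R ℝ (g 0 1) ^ 2 +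
        algebraMap R ℝ (g 1 0) ^ 2 + algebraMap R ℝ (g 1 1) ^ 2) / 2 := by
  have hcoe := coe_specialLinearGroup_apply g I
  have hdet := congrArg (algebraMap R ℝ) g.det_coe
  rw [Matrix.det_fin_two, map_sub, map_mul, map_mul, map_one] at hdet
  set a := algebraMap R ℝ (g 0 0)
  set b := algebraMap R ℝ (g 0 1)
  set c := algebraMap R ℝ (g 1 0)
  set d := algebraMap R ℝ (g 1 1)
  clear_value a b c d
  have hN : c ^ 2 + d ^ 2 ≠ 0 := by
    intro h
    nlinarith [sq_nonneg (a * c + b * d), sq_nonneg a, sq_nonneg b]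
  obtain ⟨hre, him⟩ : (g • I).re = (a * c + b * d) / (c ^ 2 + d ^ 2) ∧
      (g • I).im = 1 / (c ^ 2 + d ^ 2) := by
    rw [← coe_re, ← coe_im, hcoe, coe_I]
    simp only [Complex.div_re, Complex.div_im, Complex.normSq_apply, Complex.add_re,
      Complex.add_im, Complex.mul_re, Complex.mul_im, Complex.ofReal_re, Complex.ofReal_im,
      Complex.I_re, Complex.I_im, mul_zero, mul_one, sub_self, zero_add, add_zero, ← sq, ne_eq,
      OfNat.ofNat_ne_zero, not_false_eq_true, zero_pow]
    refine ⟨by ring, ?_⟩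
    rw [← sub_div, hdet, add_comm]
  rw [cosh_dist', hre, him, I_re, I_im]
  field_simp
  linear_combination -(a * d - b * c + 1) * hdet

end UpperHalfPlane

open Real Complex UpperHalfPlane Matrix

theorem stmt_15 :
    let A : Matrix.SpecialLinearGroup (Fin 2) ℤ := ⟨!![1, 2; 0, 1], by decide⟩
    let B : Matrix.SpecialLinearGroup (Fin 2) ℤ := ⟨!![1, 0; 2, 1], by decide⟩
    let z : UpperHalfPlane := ⟨Complex.I, by simp⟩
    dist z (A • z) = Real.log (3 + 2 * Real.sqrt 2) ∧
    dist z (B • z) = Real.log (3 + 2 * Real.sqrt 2) ∧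
    Real.arccos (Real.tanh (dist z (A • z) / 2)) +
      Real.arccos (Real.tanh (dist z (B • z) / 2)) = π / 2 := by
  intro A B z
  have hdist : ∀ w, Real.cosh (dist z w) = 3 → dist z w = arcosh 3 := fun w hw => by
    rw [← hw, arcosh_cosh dist_nonneg]
  have hA : dist z (A • z) = arcosh 3 := hdist _ <| by
    rw [show z = UpperHalfPlane.I from rfl, cosh_dist_I_smul_I]; norm_num [A]
  have hB : dist z (B • z) = arcosh 3 := hdist _ <| by
    rw [show z = UpperHalfPlane.I from rfl, cosh_dist_I_smul_I]; norm_num [B]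
  rw [hA, hB, arccos_tanh_half_arcosh_three, arcosh_three]
  exact ⟨rfl, rfl, by ring⟩
end
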